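/- arXiv:1312.3433 — 6 statements merged into one kernel-verified Lean document; each statement's English description precedes it below -/
import Mathlib

section
/- Let K be a field and q ∈ K a unit that is not a root of unity. Let V be a finite-dimensional K-vector space, d ≥ 0, and A, A* : V → V linear maps. Suppose: θ_i = α + b·q^{2i−d} + c·q^{d−2i} and θ*_i = α* + b*·q^{2i−d} + c*·q^{d−2i} (0 ≤ i ≤ d) are two sequences of pairwise distinct scalars with b, c, b*, c* nonzero; V_i is the θ_i-eigenspace of A with V = V_0 ⊕ ⋯ ⊕ V_d and A* V_i ⊆ V_{i−1} + V_i + V_{i+1} for all i; V*_i is the θ*_i-eigenspace of A* with V = V*_0 ⊕ ⋯ ⊕ V*_d and A V*_i ⊆ V*_{i−1} + V*_i + V*_{i+1} for all i (where V_{−1} = V_{d+1} = V*_{−1} = V*_{d+1} = 0). Then there exist scalars β, γ, γ*, δ, δ* ∈ K such that [A, A²A* − β·A A* A + A* A² − γ·(A A* + A* A) − δ·A*] = 0 and [A*, A*²A − β·A* A A* + A A*² − γ*·(A* A + A A*) − δ*·A] = 0, where [X,Y] = XY − YX denotes the commutator of linear maps. -/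
/-!
For `v` in the `θᵢ`-eigenspace of `A`, the expression `C = A²A* − βAA*A + A*A² − γ(AA* + A*A) − δA*`
gives `C v = p(A)(A* v)` with `p(x) = x² − βxθᵢ + θᵢ² − γ(x + θᵢ) − δ`. For
`β = q² + q⁻²`, `γ = α(2 − β)` and `δ = (2 − β)(bc(2 + β) − α²)` the q-Racah eigenvalues satisfy
`p(θᵢ₋₁) = p(θᵢ₊₁) = 0`, so `p(A)` kills the components of `A* v` in `Vᵢ₋₁` and `Vᵢ₊₁`. Hence `C`
preserves every eigenspace of `A` and commutes with `A`; the same argument with `A` and `A*`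
exchanged gives the second relation.
-/

theorem qRacah_step_relation {K : Type*} [Field K] {q x α b c β θ θ' : K} (hq : q ≠ 0)
    (hx : x ≠ 0) (hβ : β = q ^ 2 + q⁻¹ ^ 2) (hθ : θ = α + b * x + c * x⁻¹)
    (hθ' : θ' = α + b * (q ^ 2 * x) + c * (q ^ 2 * x)⁻¹) :
    θ' ^ 2 - β * θ' * θ + θ ^ 2 - α * (2 - β) * (θ' + θ)
      - (2 - β) * (b * c * (2 + β) - α ^ 2) = 0 := by
  subst hβ hθ hθ'
  field_simp
  ring

theorem qRacah_recurrence {K : Type*} [Field K] {q α b c β : K} (hq : q ≠ 0)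
    (hβ : β = q ^ 2 + q⁻¹ ^ 2) {d : ℕ} {θ : ℕ → K}
    (hθ : ∀ i, i ≤ d → θ i = α + b * q ^ (2 * (i : ℤ) - (d : ℤ)) + c * q ^ ((d : ℤ) - 2 * (i : ℤ)))
    {i : ℕ} (hi : i + 1 ≤ d) :
    θ (i + 1) ^ 2 - β * θ (i + 1) * θ i + θ i ^ 2 - α * (2 - β) * (θ (i + 1) + θ i)
      - (2 - β) * (b * c * (2 + β) - α ^ 2) = 0 := by
  have hshift : q ^ (2 * ((i + 1 : ℕ) : ℤ) - d) = q ^ 2 * q ^ (2 * (i : ℤ) - d) := by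
    rw [← zpow_natCast q 2, ← zpow_add₀ hq]; push_cast; ring_nf
  refine qRacah_step_relation (x := q ^ (2 * (i : ℤ) - d)) hq (zpow_ne_zero _ hq) hβ ?_ ?_
  · rw [hθ i (by omega), ← zpow_neg, neg_sub]
  · rw [hθ (i + 1) hi, ← hshift, ← zpow_neg, neg_sub]

namespace Module.End

variable {K V : Type*} [Field K] [AddCommGroup V] [Module K V]

def tridiagonalFactor (A : End K V) (β γ δ θ : K) : End K V :=
  A ^ 2 - (β * θ + γ) • A + (θ ^ 2 - γ * θ - δ) • 1

variable {A : End K V} {β γ δ θ t : K}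

theorem tridiagonalFactor_apply_of_mem_eigenspace {w : V} (hw : w ∈ eigenspace A t) :
    tridiagonalFactor A β γ δ θ w = (t ^ 2 - β * t * θ + θ ^ 2 - γ * (t + θ) - δ) • w := by
  rw [mem_eigenspace_iff] at hw
  simp only [tridiagonalFactor, LinearMap.sub_apply, LinearMap.add_apply, LinearMap.smul_apply,
    pow_two, mul_apply, one_apply, hw, map_smul, smul_smul]
  module

theorem tridiagonal_apply_of_mem_eigenspace (Astar : End K V) {v : V} (hv : v ∈ eigenspace A θ) :
    (A ^ 2 * Astar - β • (A * Astar * A) + Astar * A ^ 2 - γ • (A * Astar + Astar * A)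
      - δ • Astar) v = tridiagonalFactor A β γ δ θ (Astar v) := by
  rw [mem_eigenspace_iff] at hv
  simp only [tridiagonalFactor, LinearMap.sub_apply, LinearMap.add_apply, LinearMap.smul_apply,
    pow_two, mul_apply, one_apply, hv, map_smul]
  module

theorem map_tridiagonalFactor_eigenspace_le :
    (eigenspace A θ).map (tridiagonalFactor A β γ δ θ) ≤ eigenspace A θ :=
  Submodule.map_le_iff_le_comap.mpr fun _ hw => by
    simpa [tridiagonalFactor_apply_of_mem_eigenspace hw] using Submodule.smul_mem _ _ hw

theorem map_tridiagonalFactor_eigenspace_eq_bot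
    (h : t ^ 2 - β * t * θ + θ ^ 2 - γ * (t + θ) - δ = 0) :
    (eigenspace A t).map (tridiagonalFactor A β γ δ θ) = ⊥ :=
  LinearMap.le_ker_iff_map.mp fun _ hw => by
    simp [tridiagonalFactor_apply_of_mem_eigenspace hw, h]

theorem tridiagonal_apply_mem_eigenspace {Astar : End K V} {P Q : Submodule K V}
    (hP : P.map (tridiagonalFactor A β γ δ θ) = ⊥) (hQ : Q.map (tridiagonalFactor A β γ δ θ) = ⊥)
    (htri : (eigenspace A θ).map Astar ≤ P ⊔ eigenspace A θ ⊔ Q) {v : V}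
    (hv : v ∈ eigenspace A θ) :
    (A ^ 2 * Astar - β • (A * Astar * A) + Astar * A ^ 2 - γ • (A * Astar + Astar * A)
      - δ • Astar) v ∈ eigenspace A θ := by
  rw [tridiagonal_apply_of_mem_eigenspace Astar hv]
  have hmap : (P ⊔ eigenspace A θ ⊔ Q).map (tridiagonalFactor A β γ δ θ) ≤ eigenspace A θ := by
    simp only [Submodule.map_sup, hP, hQ, bot_sup_eq, sup_bot_eq]
    exact map_tridiagonalFactor_eigenspace_le
  exact hmap (Submodule.mem_map_of_mem (htri (Submodule.mem_map_of_mem hv)))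

theorem commute_of_forall_mapsTo_eigenspace {ι : Type*} {μ : ι → K}
    (hA : ⨆ i, eigenspace A (μ i) = ⊤) {C : End K V}
    (hC : ∀ i, Set.MapsTo C (eigenspace A (μ i)) (eigenspace A (μ i))) : Commute A C := by
  have hker : ∀ i, eigenspace A (μ i) ≤ LinearMap.ker (A * C - C * A) := fun i v hv => by
    rw [LinearMap.mem_ker, LinearMap.sub_apply, mul_apply, mul_apply,
      mem_eigenspace_iff.mp (hC i hv), mem_eigenspace_iff.mp hv, map_smul, sub_self]
  exact sub_eq_zero.mp (LinearMap.ker_eq_top.mp (top_le_iff.mp (hA ▸ iSup_le hker)))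

theorem commute_tridiagonal_of_recurrence {Astar : End K V} {d : ℕ} {θ : ℕ → K}
    (hsum : ⨆ i : Fin (d + 1), eigenspace A (θ i) = ⊤)
    (htri : ∀ i, i ≤ d → (eigenspace A (θ i)).map Astar ≤
      (if i = 0 then ⊥ else eigenspace A (θ (i - 1))) ⊔ eigenspace A (θ i)
        ⊔ (if i = d then ⊥ else eigenspace A (θ (i + 1))))
    (hrec : ∀ i, i + 1 ≤ d →
      θ (i + 1) ^ 2 - β * θ (i + 1) * θ i + θ i ^ 2 - γ * (θ (i + 1) + θ i) - δ = 0) :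
    Commute A (A ^ 2 * Astar - β • (A * Astar * A) + Astar * A ^ 2
      - γ • (A * Astar + Astar * A) - δ • Astar) := by
  refine commute_of_forall_mapsTo_eigenspace hsum fun ⟨i, hi⟩ v hv => ?_
  refine tridiagonal_apply_mem_eigenspace ?_ ?_ (htri i (Nat.lt_succ_iff.mp hi)) hv
  · split_ifs with h0
    · exact Submodule.map_bot _
    · refine map_tridiagonalFactor_eigenspace_eq_bot ?_
      have h := hrec (i - 1) (by omega)
      rw [Nat.sub_add_cancel (Nat.pos_of_ne_zero h0)] at h
      linear_combination h
  · split_ifs with hd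
    · exact Submodule.map_bot _
    · exact map_tridiagonalFactor_eigenspace_eq_bot (hrec i (by omega))

end Module.End

theorem stmt3_general (K V : Type*) [Field K] [AddCommGroup V] [Module K V]
    (q : K) (hq : q ≠ 0)
    (d : ℕ) (A Astar : Module.End K V)
    (α αs b c bs cs : K)
    (θ θs : ℕ → K)
    (hθ : ∀ i, i ≤ d → θ i = α + b * q ^ (2 * (i : ℤ) - (d : ℤ)) + c * q ^ ((d : ℤ) - 2 * (i : ℤ)))
    (hθs : ∀ i, i ≤ d → θs i = αs + bs * q ^ (2 * (i : ℤ) - (d : ℤ)) + cs * q ^ ((d : ℤ) - 2 * (i : ℤ)))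
    (hsum : DirectSum.IsInternal (fun i : Fin (d + 1) => Module.End.eigenspace A (θ i.1)))
    (hsums : DirectSum.IsInternal (fun i : Fin (d + 1) => Module.End.eigenspace Astar (θs i.1)))
    (htri : ∀ i, i ≤ d → Submodule.map Astar (Module.End.eigenspace A (θ i)) ≤
      (if i = 0 then ⊥ else Module.End.eigenspace A (θ (i - 1)))
        ⊔ Module.End.eigenspace A (θ i)
        ⊔ (if i = d then ⊥ else Module.End.eigenspace A (θ (i + 1))))
    (htris : ∀ i, i ≤ d → Submodule.map A (Module.End.eigenspace Astar (θs i)) ≤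
      (if i = 0 then ⊥ else Module.End.eigenspace Astar (θs (i - 1)))
        ⊔ Module.End.eigenspace Astar (θs i)
        ⊔ (if i = d then ⊥ else Module.End.eigenspace Astar (θs (i + 1)))) :
    ∃ β γ γs δ δs : K,
      A * (A ^ 2 * Astar - β • (A * Astar * A) + Astar * A ^ 2
            - γ • (A * Astar + Astar * A) - δ • Astar)
        - (A ^ 2 * Astar - β • (A * Astar * A) + Astar * A ^ 2
            - γ • (A * Astar + Astar * A) - δ • Astar) * A = 0
      ∧ Astar * (Astar ^ 2 * A - β • (Astar * A * Astar) + A * Astar ^ 2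
            - γs • (Astar * A + A * Astar) - δs • A)
        - (Astar ^ 2 * A - β • (Astar * A * Astar) + A * Astar ^ 2
            - γs • (Astar * A + A * Astar) - δs • A) * Astar = 0 := by
  obtain ⟨β, hβ⟩ : ∃ β : K, β = q ^ 2 + q⁻¹ ^ 2 := ⟨_, rfl⟩
  refine ⟨β, α * (2 - β), αs * (2 - β), (2 - β) * (b * c * (2 + β) - α ^ 2),
    (2 - β) * (bs * cs * (2 + β) - αs ^ 2), ?_, ?_⟩
  · exact sub_eq_zero.mpr <| (Module.End.commute_tridiagonal_of_recurrence
      hsum.submodule_iSup_eq_top htri fun _ hi => qRacah_recurrence hq hβ hθ hi).eq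
  · exact sub_eq_zero.mpr <| (Module.End.commute_tridiagonal_of_recurrence
      hsums.submodule_iSup_eq_top htris fun _ hi => qRacah_recurrence hq hβ hθs hi).eq

/-- A tridiagonal pair of q-Racah type satisfies the tridiagonal relations. -/
theorem stmt3 (K V : Type*) [Field K] [AddCommGroup V] [Module K V] [FiniteDimensional K V]
    (q : K) (hq : q ≠ 0) (hqroot : ∀ n : ℕ, 0 < n → q ^ n ≠ 1)
    (d : ℕ) (A Astar : Module.End K V)
    (α αs b c bs cs : K) (hb : b ≠ 0) (hc : c ≠ 0) (hbs : bs ≠ 0) (hcs : cs ≠ 0)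
    (θ θs : ℕ → K)
    (hθ : ∀ i, i ≤ d → θ i = α + b * q ^ (2 * (i : ℤ) - (d : ℤ)) + c * q ^ ((d : ℤ) - 2 * (i : ℤ)))
    (hθs : ∀ i, i ≤ d → θs i = αs + bs * q ^ (2 * (i : ℤ) - (d : ℤ)) + cs * q ^ ((d : ℤ) - 2 * (i : ℤ)))
    (hdist : ∀ i, i ≤ d → ∀ j, j ≤ d → θ i = θ j → i = j)
    (hdists : ∀ i, i ≤ d → ∀ j, j ≤ d → θs i = θs j → i = j)
    (hsum : DirectSum.IsInternal (fun i : Fin (d + 1) => Module.End.eigenspace A (θ i.1)))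
    (hsums : DirectSum.IsInternal (fun i : Fin (d + 1) => Module.End.eigenspace Astar (θs i.1)))
    (htri : ∀ i, i ≤ d → Submodule.map Astar (Module.End.eigenspace A (θ i)) ≤
      (if i = 0 then ⊥ else Module.End.eigenspace A (θ (i - 1)))
        ⊔ Module.End.eigenspace A (θ i)
        ⊔ (if i = d then ⊥ else Module.End.eigenspace A (θ (i + 1))))
    (htris : ∀ i, i ≤ d → Submodule.map A (Module.End.eigenspace Astar (θs i)) ≤
      (if i = 0 then ⊥ else Module.End.eigenspace Astar (θs (i - 1)))
        ⊔ Module.End.eigenspace Astar (θs i)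
        ⊔ (if i = d then ⊥ else Module.End.eigenspace Astar (θs (i + 1)))) :
    ∃ β γ γs δ δs : K,
      A * (A ^ 2 * Astar - β • (A * Astar * A) + Astar * A ^ 2
            - γ • (A * Astar + Astar * A) - δ • Astar)
        - (A ^ 2 * Astar - β • (A * Astar * A) + Astar * A ^ 2
            - γ • (A * Astar + Astar * A) - δ • Astar) * A = 0
      ∧ Astar * (Astar ^ 2 * A - β • (Astar * A * Astar) + A * Astar ^ 2
            - γs • (Astar * A + A * Astar) - δs • A)
        - (Astar ^ 2 * A - β • (Astar * A * Astar) + A * Astar ^ 2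
            - γs • (Astar * A + A * Astar) - δs • A) * Astar = 0 :=
  stmt3_general K V q hq d A Astar α αs b c bs cs θ θs hθ hθs hsum hsums htri htris
end

section
/- Let K be a field, q ∈ K a unit, α, b, c ∈ K, and d ≥ 0 an integer. Define θ_i := α + b·q^{2i−d} + c·q^{d−2i} for 0 ≤ i ≤ d, and for s ≥ 1 set β_s := q^{2s} + q^{−2s}, γ_s := −α(q^s − q^{−s})², δ_s := α²(q^s − q^{−s})² − bc(q^{2s} − q^{−2s})². Then for every integer r ≥ 1 and all 0 ≤ i, j ≤ d with |i − j| ≤ r: (θ_i − θ_j) · ∏_{s=1}^{r} (θ_i² − β_s·θ_i·θ_j + θ_j² − γ_s·(θ_i + θ_j) − δ_s) = 0. -/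
/-!
Writing `θ_i = α + b u + c u⁻¹` with `u = q^{2i-d}`, the `s`-th quadratic factor of `p_r`
vanishes identically on pairs `(α + b u + c u⁻¹, α + b v + c v⁻¹)` with `u = v q^{2s}`;
since `q^{2i-d} = q^{2j-d} q^{2(i-j)}`, the factor with `s = |i - j|` kills `p_r(θ_i, θ_j)`
(and `θ_i - θ_j` does so when `i = j`).
-/

namespace QRacah

variable {K : Type*} [Field K] (α b c q : K)

def eigenvalue (m : ℤ) : K := α + b * q ^ m + c * q ^ (-m)

def factor (s : ℤ) (x y : K) : K :=
  x ^ 2 - (q ^ (2 * s) + q ^ (-(2 * s))) * x * y + y ^ 2 - (-α * (q ^ s - q ^ (-s)) ^ 2) * (x + y)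
    - (α ^ 2 * (q ^ s - q ^ (-s)) ^ 2 - b * c * (q ^ (2 * s) - q ^ (-(2 * s))) ^ 2)

variable {q}

lemma factor_comm (s : ℤ) (x y : K) : factor α b c q s x y = factor α b c q s y x := by
  unfold factor; ring

lemma factor_eigenvalue_add_two_mul (hq : q ≠ 0) (n s : ℤ) :
    factor α b c q s (eigenvalue α b c q (n + 2 * s)) (eigenvalue α b c q n) = 0 := by
  have hv : q ^ n ≠ 0 := zpow_ne_zero n hq
  have hz : q ^ s ≠ 0 := zpow_ne_zero s hq
  simp only [factor, eigenvalue, neg_add, zpow_add₀ hq, zpow_neg, zpow_mul, mul_comm (2 : ℤ) s,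
    zpow_ofNat]
  field_simp
  ring

lemma factor_eigenvalue_eq_zero (hq : q ≠ 0) {m n : ℤ} {s : ℕ} (h : (m - n).natAbs = 2 * s) :
    factor α b c q s (eigenvalue α b c q m) (eigenvalue α b c q n) = 0 := by
  rcases Int.natAbs_eq (m - n) with hmn | hmn
  · obtain rfl : m = n + 2 * s := by omega
    exact factor_eigenvalue_add_two_mul α b c hq n s
  · obtain rfl : n = m + 2 * s := by omega
    rw [factor_comm]
    exact factor_eigenvalue_add_two_mul α b c hq m s

end QRacah

open QRacah in
/-- The polynomial `p_r(x,y) = (x-y) ∏_{s=1}^r (x² - β_s xy + y² - γ_s(x+y) - δ_s)`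
with `β_s = q^{2s}+q^{-2s}`, `γ_s = -α(q^s-q^{-s})²`,
`δ_s = α²(q^s-q^{-s})² - bc(q^{2s}-q^{-2s})²` vanishes at pairs of q-Racah
eigenvalues `θ_i, θ_j` with `|i-j| ≤ r`. -/
theorem stmt4 (K : Type*) [Field K] (q : K) (hq : q ≠ 0)
    (α b c : K) (d : ℕ) (θ : ℕ → K)
    (hθ : ∀ i, i ≤ d → θ i = α + b * q ^ (2 * (i : ℤ) - (d : ℤ)) + c * q ^ ((d : ℤ) - 2 * (i : ℤ)))
    (β γ δ : ℕ → K)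
    (hβ : ∀ s : ℕ, 1 ≤ s → β s = q ^ (2 * (s : ℤ)) + q ^ (-(2 * (s : ℤ))))
    (hγ : ∀ s : ℕ, 1 ≤ s → γ s = - α * (q ^ (s : ℤ) - q ^ (-(s : ℤ))) ^ 2)
    (hδ : ∀ s : ℕ, 1 ≤ s → δ s = α ^ 2 * (q ^ (s : ℤ) - q ^ (-(s : ℤ))) ^ 2
      - b * c * (q ^ (2 * (s : ℤ)) - q ^ (-(2 * (s : ℤ)))) ^ 2) :
    ∀ r : ℕ, 1 ≤ r → ∀ i j : ℕ, i ≤ d → j ≤ d → ((i : ℤ) - (j : ℤ)).natAbs ≤ r →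
      (θ i - θ j) * ∏ s ∈ Finset.Icc 1 r,
        (θ i ^ 2 - β s * θ i * θ j + θ j ^ 2 - γ s * (θ i + θ j) - δ s) = 0 := by
  intro r _ i j hi hj hij
  have hθ' : ∀ k, k ≤ d → θ k = eigenvalue α b c q (2 * k - d) := fun k hk => by
    rw [hθ k hk, eigenvalue, neg_sub]
  rcases eq_or_ne i j with rfl | hne
  · simp
  set s := ((i : ℤ) - j).natAbs
  have hs : 1 ≤ s := by omega
  refine mul_eq_zero_of_right _ (Finset.prod_eq_zero (Finset.mem_Icc.mpr ⟨hs, hij⟩) ?_)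
  rw [hθ' i hi, hθ' j hj, hβ s hs, hγ s hs, hδ s hs]
  exact factor_eigenvalue_eq_zero α b c hq (by omega)
end

section
/- Let K be a field, V a finite-dimensional K-vector space, d ≥ 0, and A, A* : V → V linear maps. Suppose θ_0, …, θ_d ∈ K are pairwise distinct, V_i is the θ_i-eigenspace of A, V = V_0 ⊕ ⋯ ⊕ V_d, and A* V_i ⊆ V_{i−1} + V_i + V_{i+1} for all 0 ≤ i ≤ d (with V_{−1} = V_{d+1} = 0). Fix an integer r ≥ 1 and scalars β_s, γ_s, δ_s ∈ K (1 ≤ s ≤ r) such that θ_i² − β_s·θ_i·θ_j + θ_j² − γ_s·(θ_i + θ_j) − δ_s = 0 for all 0 ≤ i, j ≤ d with |i − j| = s. Then for any family of scalars (a_{ij})_{i,j ≥ 0, i+j ≤ 2r+1} in K satisfying Σ_{i+j ≤ 2r+1} a_{ij}·x^i·y^j = (x − y)·∏_{s=1}^{r}(x² − β_s·xy + y² − γ_s·(x+y) − δ_s) for all x, y ∈ K, one has Σ_{i+j ≤ 2r+1} a_{ij} · A^i ∘ (A*)^r ∘ A^j = 0 as a linear map on V. -/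
/-!
Fix `v` in the eigenspace `V_j`. Then `Σ a_{kl} A^k (A*)^r A^l v = g ((A*)^r v)` with
`g = Σ a_{kl} θ_j^l A^k`, and by the tridiagonal condition `(A*)^r v` lies in the sum of the
`V_k` with `|k - j| ≤ r`. On such a `V_k` the operator `g` acts as the scalar
`(θ_k - θ_j) ∏_s (θ_k² - β_s θ_k θ_j + θ_j² - γ_s (θ_k + θ_j) - δ_s)`, which vanishes: by the
first factor if `k = j`, and by the factor `s = |k - j|` otherwise.
-/

open Module.End

section Band

variable {K V : Type*} [Field K] [AddCommGroup V] [Module K V]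

def band (E : ℕ → Submodule K V) (d m j : ℕ) : Submodule K V :=
  ⨆ (k) (_ : k ≤ d) (_ : ((k : ℤ) - j).natAbs ≤ m), E k

variable {E : ℕ → Submodule K V} {d m j : ℕ}

lemma le_band {k : ℕ} (hk : k ≤ d) (hkj : ((k : ℤ) - j).natAbs ≤ m) : E k ≤ band E d m j :=
  le_iSup₂_of_le k hk (le_iSup_of_le hkj le_rfl)

lemma band_le {P : Submodule K V} (h : ∀ k ≤ d, ((k : ℤ) - j).natAbs ≤ m → E k ≤ P) :
    band E d m j ≤ P :=
  iSup₂_le fun k hk => iSup_le (h k hk)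

variable {B : Module.End K V}

lemma map_band_le_band_succ
    (htri : ∀ k ≤ d, (E k).map B ≤ (if k = 0 then ⊥ else E (k - 1)) ⊔ E k ⊔
      (if k = d then ⊥ else E (k + 1))) :
    (band E d m j).map B ≤ band E d (m + 1) j := by
  refine Submodule.map_le_iff_le_comap.mpr <| band_le fun k hk hkj => ?_
  refine Submodule.map_le_iff_le_comap.mp <| (htri k hk).trans <| sup_le (sup_le ?_ ?_) ?_
  · split_ifs
    · exact bot_le
    · exact le_band (by omega) (by omega)
  · exact le_band hk (by omega)
  · split_ifs
    · exact bot_le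
    · exact le_band (by omega) (by omega)

lemma map_pow_le_band (hj : j ≤ d)
    (htri : ∀ k ≤ d, (E k).map B ≤ (if k = 0 then ⊥ else E (k - 1)) ⊔ E k ⊔
      (if k = d then ⊥ else E (k + 1))) (m : ℕ) :
    (E j).map (B ^ m) ≤ band E d m j := by
  induction m with
  | zero => simpa [one_eq_id] using le_band (E := E) hj (by simp)
  | succ m ih =>
    rw [pow_succ', mul_eq_comp, Submodule.map_comp]
    exact (Submodule.map_mono ih).trans (map_band_le_band_succ htri)

end Band

section Eigenspace

variable {K V : Type*} [Field K] [AddCommGroup V] [Module K V] {A : Module.End K V} {μ : K}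
  {v : V}

lemma pow_apply_of_mem_eigenspace (hv : v ∈ eigenspace A μ) (n : ℕ) :
    (A ^ n) v = μ ^ n • v := by
  induction n with
  | zero => simp
  | succ n ih =>
    rw [pow_succ, mul_apply, mem_eigenspace_iff.mp hv, map_smul, ih, smul_smul, ← pow_succ']

lemma sum_sum_smul_pow_apply_of_mem_eigenspace (hv : v ∈ eigenspace A μ) (s : Finset ℕ)
    (t : ℕ → Finset ℕ) (c : ℕ → ℕ → K) :
    (∑ i ∈ s, ∑ j ∈ t i, c i j • A ^ i) v = (∑ i ∈ s, ∑ j ∈ t i, c i j * μ ^ i) • v := by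
  simp only [LinearMap.sum_apply, LinearMap.smul_apply, pow_apply_of_mem_eigenspace hv,
    smul_smul, Finset.sum_smul]

lemma sum_sum_smul_pow_mul_mul_pow_apply_of_mem_eigenspace (hv : v ∈ eigenspace A μ)
    (B : Module.End K V) (s : Finset ℕ) (t : ℕ → Finset ℕ) (c : ℕ → ℕ → K) :
    (∑ i ∈ s, ∑ j ∈ t i, c i j • (A ^ i * B * A ^ j)) v =
      (∑ i ∈ s, ∑ j ∈ t i, (c i j * μ ^ j) • A ^ i) (B v) := by
  simp only [LinearMap.sum_apply, LinearMap.smul_apply, mul_apply,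
    pow_apply_of_mem_eigenspace hv, map_smul, smul_smul]

end Eigenspace

lemma sub_mul_prod_eq_zero {K : Type*} [Field K] {d r : ℕ} {θ β γ δ : ℕ → K}
    (hrel : ∀ s : ℕ, 1 ≤ s → s ≤ r → ∀ i, i ≤ d → ∀ j, j ≤ d →
      ((i : ℤ) - (j : ℤ)).natAbs = s →
      θ i ^ 2 - β s * θ i * θ j + θ j ^ 2 - γ s * (θ i + θ j) - δ s = 0)
    {i j : ℕ} (hi : i ≤ d) (hj : j ≤ d) (hij : ((i : ℤ) - j).natAbs ≤ r) :
    (θ i - θ j) * ∏ s ∈ Finset.Icc 1 r,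
      (θ i ^ 2 - β s * θ i * θ j + θ j ^ 2 - γ s * (θ i + θ j) - δ s) = 0 := by
  obtain rfl | hne := eq_or_ne i j
  · rw [sub_self, zero_mul]
  · have hs : 1 ≤ ((i : ℤ) - j).natAbs := by omega
    rw [Finset.prod_eq_zero (Finset.mem_Icc.mpr ⟨hs, hij⟩) (hrel _ hs hij i hi j hj rfl),
      mul_zero]

theorem stmt5_general (K V : Type*) [Field K] [AddCommGroup V] [Module K V]
    (d : ℕ) (A Astar : Module.End K V) (θ : ℕ → K)
    (hsum : DirectSum.IsInternal (fun i : Fin (d + 1) => Module.End.eigenspace A (θ i.1)))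
    (htri : ∀ i, i ≤ d → Submodule.map Astar (Module.End.eigenspace A (θ i)) ≤
      (if i = 0 then ⊥ else Module.End.eigenspace A (θ (i - 1)))
        ⊔ Module.End.eigenspace A (θ i)
        ⊔ (if i = d then ⊥ else Module.End.eigenspace A (θ (i + 1))))
    (r : ℕ) (β γ δ : ℕ → K)
    (hrel : ∀ s : ℕ, 1 ≤ s → s ≤ r → ∀ i, i ≤ d → ∀ j, j ≤ d →
      ((i : ℤ) - (j : ℤ)).natAbs = s →
      θ i ^ 2 - β s * θ i * θ j + θ j ^ 2 - γ s * (θ i + θ j) - δ s = 0)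
    (a : ℕ → ℕ → K)
    (ha : ∀ x y : K,
      ∑ i ∈ Finset.range (2 * r + 2), ∑ j ∈ Finset.range (2 * r + 2 - i),
          a i j * x ^ i * y ^ j
        = (x - y) * ∏ s ∈ Finset.Icc 1 r,
            (x ^ 2 - β s * x * y + y ^ 2 - γ s * (x + y) - δ s)) :
    ∑ i ∈ Finset.range (2 * r + 2), ∑ j ∈ Finset.range (2 * r + 2 - i),
      a i j • (A ^ i * Astar ^ r * A ^ j) = 0 := by
  rw [← LinearMap.ker_eq_top, eq_top_iff, ← hsum.submodule_iSup_eq_top, iSup_le_iff]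
  rintro ⟨j, hj⟩ v hv
  replace hj : j ≤ d := Nat.lt_succ_iff.mp hj
  have hband : band (fun k => eigenspace A (θ k)) d r j ≤ LinearMap.ker
      (∑ i ∈ Finset.range (2 * r + 2), ∑ l ∈ Finset.range (2 * r + 2 - i),
        (a i l * θ j ^ l) • A ^ i) := by
    refine band_le fun k hk hkj u hu => ?_
    rw [LinearMap.mem_ker, sum_sum_smul_pow_apply_of_mem_eigenspace hu]
    simp only [mul_right_comm _ (θ j ^ _)]
    rw [ha, sub_mul_prod_eq_zero hrel hk hj hkj, zero_smul]
  rw [LinearMap.mem_ker, sum_sum_smul_pow_mul_mul_pow_apply_of_mem_eigenspace hv]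
  exact hband (map_pow_le_band hj htri r (Submodule.mem_map_of_mem hv))

/-- The r-th higher order tridiagonal relation: if `A` is diagonalizable with
pairwise distinct eigenvalues `θ 0, …, θ d`, `A*` satisfies the tridiagonal
condition with respect to the eigenspaces of `A`, and the scalars `β_s, γ_s, δ_s`
annihilate pairs of eigenvalues at distance `s`, then any coefficient family
`a i j` (for `i + j ≤ 2r+1`) realizing the generating polynomial
`(x-y) ∏_{s=1}^r (x² - β_s xy + y² - γ_s (x+y) - δ_s)` gives
`Σ a i j A^i (A*)^r A^j = 0`. -/
theorem stmt5 (K V : Type*) [Field K] [AddCommGroup V] [Module K V] [FiniteDimensional K V]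
    (d : ℕ) (A Astar : Module.End K V) (θ : ℕ → K)
    (hdist : ∀ i, i ≤ d → ∀ j, j ≤ d → θ i = θ j → i = j)
    (hsum : DirectSum.IsInternal (fun i : Fin (d + 1) => Module.End.eigenspace A (θ i.1)))
    (htri : ∀ i, i ≤ d → Submodule.map Astar (Module.End.eigenspace A (θ i)) ≤
      (if i = 0 then ⊥ else Module.End.eigenspace A (θ (i - 1)))
        ⊔ Module.End.eigenspace A (θ i)
        ⊔ (if i = d then ⊥ else Module.End.eigenspace A (θ (i + 1))))
    (r : ℕ) (hr : 1 ≤ r) (β γ δ : ℕ → K)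
    (hrel : ∀ s : ℕ, 1 ≤ s → s ≤ r → ∀ i, i ≤ d → ∀ j, j ≤ d →
      ((i : ℤ) - (j : ℤ)).natAbs = s →
      θ i ^ 2 - β s * θ i * θ j + θ j ^ 2 - γ s * (θ i + θ j) - δ s = 0)
    (a : ℕ → ℕ → K)
    (ha : ∀ x y : K,
      ∑ i ∈ Finset.range (2 * r + 2), ∑ j ∈ Finset.range (2 * r + 2 - i),
          a i j * x ^ i * y ^ j
        = (x - y) * ∏ s ∈ Finset.Icc 1 r,
            (x ^ 2 - β s * x * y + y ^ 2 - γ s * (x + y) - δ s)) :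
    ∑ i ∈ Finset.range (2 * r + 2), ∑ j ∈ Finset.range (2 * r + 2 - i),
      a i j • (A ^ i * Astar ^ r * A ^ j) = 0 :=
  stmt5_general K V d A Astar θ hsum htri r β γ δ hrel a ha
end

section
/- Let K be a field and q ∈ K a unit that is not a root of unity. Let V be a finite-dimensional K-vector space, d ≥ 0, and A, A* : V → V linear maps. Suppose θ_i = b·q^{2i−d} + c·q^{d−2i} (0 ≤ i ≤ d) are pairwise distinct, V_i is the θ_i-eigenspace of A, V = V_0 ⊕ ⋯ ⊕ V_d, and A* V_i ⊆ V_{i−1} + V_i + V_{i+1} for all i (with V_{−1} = V_{d+1} = 0). Then, with ρ₀ := −bc·(q² − q^{−2})² and [3]_q := q² + 1 + q^{−2}, the q-Dolan–Grady relation holds: A³A* − [3]_q·A²A*A + [3]_q·A A* A² − A*A³ = ρ₀·(A A* − A* A) as linear maps on V. -/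
/-!
With `β = q² + q⁻²`, on a `θᵢ`-eigenvector `v` of `A` the difference of the two sides equals
`P(A) (A* v)` for the cubic `P(X) = (X - θᵢ)(X² - β θᵢ X + θᵢ² - ρ₀)`. Consecutive eigenvalues
`t = b u + c u⁻¹`, `μ = b u q² + c u⁻¹ q⁻²` satisfy the symmetric relation `μ² - β t μ + t² = ρ₀`,
so `θᵢ₋₁, θᵢ, θᵢ₊₁` are roots of `P`, and by tridiagonality `P(A)` kills `A* v`. The eigenspaces
span `V`, so the difference vanishes.
-/

open Module End

section DolanGrady

variable {K V : Type*} [Field K] [AddCommGroup V] [Module K V]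

def dolanGradyDefect (β ρ : K) (A Astar : Module.End K V) : Module.End K V :=
  A ^ 3 * Astar - (β + 1) • (A ^ 2 * Astar * A) + (β + 1) • (A * Astar * A ^ 2) - Astar * A ^ 3
    - ρ • (A * Astar - Astar * A)

def neighbourAnnihilator (β ρ t : K) (A : Module.End K V) : Module.End K V :=
  (A - t • 1) * (A ^ 2 - (β * t) • A + (t ^ 2 - ρ) • 1)

theorem apply_eq_pow_smul_of_apply_eq_smul {A : Module.End K V} {t : K} {v : V}
    (hv : A v = t • v) (n : ℕ) : (A ^ n) v = t ^ n • v := by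
  induction n with
  | zero => simp
  | succ n ih => rw [pow_succ, mul_apply, hv, map_smul, ih, smul_smul, ← pow_succ']

theorem dolanGradyDefect_apply_of_apply_eq_smul (β ρ : K) {t : K} (A Astar : Module.End K V)
    {v : V} (hv : A v = t • v) :
    dolanGradyDefect β ρ A Astar v = neighbourAnnihilator β ρ t A (Astar v) := by
  have hA2 (w : V) : A (A w) = (A ^ 2) w := by rw [sq, mul_apply]
  have hA3 (w : V) : A ((A ^ 2) w) = (A ^ 3) w := by rw [pow_succ' A 2, mul_apply]
  simp only [dolanGradyDefect, neighbourAnnihilator, LinearMap.sub_apply, LinearMap.add_apply,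
    LinearMap.smul_apply, mul_apply, one_apply, map_smul, map_sub, map_add, hv,
    apply_eq_pow_smul_of_apply_eq_smul hv, hA2, hA3]
  module

theorem eigenspace_le_ker_neighbourAnnihilator {β ρ t μ : K} (A : Module.End K V)
    (hμ : (μ - t) * (μ ^ 2 - β * t * μ + t ^ 2 - ρ) = 0) :
    eigenspace A μ ≤ LinearMap.ker (neighbourAnnihilator β ρ t A) := by
  intro w hw
  have hw1 : A w = μ • w := mem_eigenspace_iff.mp hw
  have hPw : neighbourAnnihilator β ρ t A w = ((μ - t) * (μ ^ 2 - β * t * μ + t ^ 2 - ρ)) • w := by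
    simp only [neighbourAnnihilator, mul_apply, LinearMap.sub_apply, LinearMap.add_apply,
      LinearMap.smul_apply, one_apply, map_smul, map_sub, map_add, hw1,
      apply_eq_pow_smul_of_apply_eq_smul hw1]
    module
  rw [LinearMap.mem_ker, hPw, hμ, zero_smul]

theorem eigenspace_le_ker_dolanGradyDefect {β ρ t : K} {A Astar : Module.End K V}
    (h : (eigenspace A t).map Astar ≤ LinearMap.ker (neighbourAnnihilator β ρ t A)) :
    eigenspace A t ≤ LinearMap.ker (dolanGradyDefect β ρ A Astar) := by
  intro v hv
  rw [LinearMap.mem_ker, dolanGradyDefect_apply_of_apply_eq_smul β ρ A Astar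
    (mem_eigenspace_iff.mp hv)]
  exact h (Submodule.mem_map_of_mem hv)

theorem eigenspace_le_ker_dolanGradyDefect_of_tridiagonal {β ρ : K} {A Astar : Module.End K V}
    {θ : ℕ → K} {d i : ℕ} (hi : i ≤ d)
    (hadj : ∀ j < d, θ (j + 1) ^ 2 - β * θ j * θ (j + 1) + θ j ^ 2 = ρ)
    (htri : (eigenspace A (θ i)).map Astar ≤
      (if i = 0 then ⊥ else eigenspace A (θ (i - 1))) ⊔ eigenspace A (θ i)
        ⊔ (if i = d then ⊥ else eigenspace A (θ (i + 1)))) :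
    eigenspace A (θ i) ≤ LinearMap.ker (dolanGradyDefect β ρ A Astar) := by
  refine eigenspace_le_ker_dolanGradyDefect (htri.trans (sup_le (sup_le ?_ ?_) ?_))
  · split_ifs with h0
    · exact bot_le
    have hdown := hadj (i - 1) (by omega)
    rw [Nat.sub_add_cancel (Nat.pos_of_ne_zero h0)] at hdown
    exact eigenspace_le_ker_neighbourAnnihilator A
      (by linear_combination (θ (i - 1) - θ i) * hdown)
  · exact eigenspace_le_ker_neighbourAnnihilator A (by rw [sub_self, zero_mul])
  · split_ifs with hd
    · exact bot_le
    exact eigenspace_le_ker_neighbourAnnihilator A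
      (by linear_combination (θ (i + 1) - θ i) * hadj i (by omega))

end DolanGrady

theorem qRacah_adjacent_eigenvalues {K : Type*} [Field K] {q : K} (hq : q ≠ 0) (b c : K) (n : ℤ) :
    (b * q ^ (n + 2) + c * q ^ (-(n + 2))) ^ 2
        - (q ^ 2 + q⁻¹ ^ 2) * (b * q ^ n + c * q ^ (-n)) * (b * q ^ (n + 2) + c * q ^ (-(n + 2)))
        + (b * q ^ n + c * q ^ (-n)) ^ 2
      = -(b * c) * (q ^ 2 - q⁻¹ ^ 2) ^ 2 := by
  have hqn : q ^ n ≠ 0 := zpow_ne_zero n hq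
  rw [zpow_neg, zpow_neg, zpow_add₀ hq]
  field_simp
  ring

theorem stmt6_general (K V : Type*) [Field K] [AddCommGroup V] [Module K V]
    (q : K) (hq : q ≠ 0)
    (d : ℕ) (A Astar : Module.End K V) (b c : K) (θ : ℕ → K)
    (hθ : ∀ i, i ≤ d → θ i = b * q ^ (2 * (i : ℤ) - (d : ℤ)) + c * q ^ ((d : ℤ) - 2 * (i : ℤ)))
    (hsum : DirectSum.IsInternal (fun i : Fin (d + 1) => Module.End.eigenspace A (θ i.1)))
    (htri : ∀ i, i ≤ d → Submodule.map Astar (Module.End.eigenspace A (θ i)) ≤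
      (if i = 0 then ⊥ else Module.End.eigenspace A (θ (i - 1)))
        ⊔ Module.End.eigenspace A (θ i)
        ⊔ (if i = d then ⊥ else Module.End.eigenspace A (θ (i + 1)))) :
    A ^ 3 * Astar - (q ^ 2 + 1 + q⁻¹ ^ 2) • (A ^ 2 * Astar * A)
        + (q ^ 2 + 1 + q⁻¹ ^ 2) • (A * Astar * A ^ 2) - Astar * A ^ 3
      = (- (b * c) * (q ^ 2 - q⁻¹ ^ 2) ^ 2) • (A * Astar - Astar * A) := by
  set β := q ^ 2 + q⁻¹ ^ 2
  set ρ := -(b * c) * (q ^ 2 - q⁻¹ ^ 2) ^ 2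
  have hadj : ∀ i < d, θ (i + 1) ^ 2 - β * θ i * θ (i + 1) + θ i ^ 2 = ρ := by
    intro i hi
    have e1 : (d : ℤ) - 2 * i = -(2 * i - d) := by ring
    have e2 : 2 * ((i + 1 : ℕ) : ℤ) - d = (2 * i - d) + 2 := by push_cast; ring
    have e3 : (d : ℤ) - 2 * ((i + 1 : ℕ) : ℤ) = -((2 * i - d) + 2) := by push_cast; ring
    rw [hθ i hi.le, hθ (i + 1) hi, e1, e2, e3]
    exact qRacah_adjacent_eigenvalues hq b c _
  have hdefect : dolanGradyDefect β ρ A Astar = 0 := by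
    rw [← LinearMap.ker_eq_top, eq_top_iff, ← hsum.submodule_iSup_eq_top]
    exact iSup_le fun i => eigenspace_le_ker_dolanGradyDefect_of_tridiagonal
      (Nat.lt_succ_iff.mp i.2) hadj (htri i (Nat.lt_succ_iff.mp i.2))
  rw [show q ^ 2 + 1 + q⁻¹ ^ 2 = β + 1 by ring, ← sub_eq_zero]
  exact hdefect

/-- The q-Dolan–Grady relation for a tridiagonal pair of reduced q-Racah type:
if the eigenvalues of `A` are `θ i = b q^(2i-d) + c q^(d-2i)` and `A*` is
tridiagonal with respect to the eigenspaces of `A`, then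
`A³A* - [3]_q A²A*A + [3]_q A A* A² - A*A³ = ρ₀ (A A* - A* A)` with
`ρ₀ = -bc (q² - q^{-2})²`. -/
theorem stmt6 (K V : Type*) [Field K] [AddCommGroup V] [Module K V] [FiniteDimensional K V]
    (q : K) (hq : q ≠ 0) (hqroot : ∀ n : ℕ, 0 < n → q ^ n ≠ 1)
    (d : ℕ) (A Astar : Module.End K V) (b c : K) (θ : ℕ → K)
    (hθ : ∀ i, i ≤ d → θ i = b * q ^ (2 * (i : ℤ) - (d : ℤ)) + c * q ^ ((d : ℤ) - 2 * (i : ℤ)))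
    (hdist : ∀ i, i ≤ d → ∀ j, j ≤ d → θ i = θ j → i = j)
    (hsum : DirectSum.IsInternal (fun i : Fin (d + 1) => Module.End.eigenspace A (θ i.1)))
    (htri : ∀ i, i ≤ d → Submodule.map Astar (Module.End.eigenspace A (θ i)) ≤
      (if i = 0 then ⊥ else Module.End.eigenspace A (θ (i - 1)))
        ⊔ Module.End.eigenspace A (θ i)
        ⊔ (if i = d then ⊥ else Module.End.eigenspace A (θ (i + 1)))) :
    A ^ 3 * Astar - (q ^ 2 + 1 + q⁻¹ ^ 2) • (A ^ 2 * Astar * A)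
        + (q ^ 2 + 1 + q⁻¹ ^ 2) • (A * Astar * A ^ 2) - Astar * A ^ 3
      = (- (b * c) * (q ^ 2 - q⁻¹ ^ 2) ^ 2) • (A * Astar - Astar * A) :=
  stmt6_general K V q hq d A Astar b c θ hθ hsum htri
end

section
/- Let K be a field and q ∈ K a unit that is not a root of unity. Define [n]_q := (q^n − q^{−n})/(q − q^{−1}), [n]_q! := ∏_{l=1}^{n}[l]_q, and the q-binomial [n choose m]_q := [n]_q!/([m]_q!·[n−m]_q!). Then for every integer r ≥ 1 and all x, y ∈ K: (x − y)·∏_{s=1}^{r}(x² − (q^{2s} + q^{−2s})·xy + y²) = Σ_{j=0}^{2r+1} (−1)^j·[2r+1 choose j]_q·x^{2r+1−j}·y^j. -/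
/-- The q-integer `[n]_q = (q^n - q^{-n})/(q - q^{-1})`. -/
def qInt {K : Type*} [Field K] (q : K) (n : ℕ) : K :=
  (q ^ n - q⁻¹ ^ n) / (q - q⁻¹)

/-- The q-factorial `[n]_q! = ∏_{l=1}^n [l]_q`. -/
def qFact {K : Type*} [Field K] (q : K) (n : ℕ) : K :=
  ∏ l ∈ Finset.Icc 1 n, qInt q l

/-- The q-binomial coefficient `[n choose m]_q = [n]_q!/([m]_q! [n-m]_q!)`. -/
def qBinom {K : Type*} [Field K] (q : K) (n m : ℕ) : K :=
  qFact q n / (qFact q m * qFact q (n - m))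

/-! The right-hand side is the case `n = 2r + 1` of the Gaussian binomial theorem
`∑ⱼ (-1)^j [n choose j]_q x^{n-j} y^j = ∏_{k<n} (x - q^{n-1-2k} y)`, which follows by
induction on `n` from the q-Pascal rule
`[n+1 choose j+1] = q^{-(j+1)} [n choose j+1] + q^{n-j} [n choose j]`
(itself a consequence of `[a + b] = q^{-a} [b] + q^b [a]`). For odd `n = 2r + 1` the exponents
`n - 1 - 2k` run through `2r, 2r - 2, …, -2r`: the factor with exponent `0` is `x - y`, and the
factors with exponents `±2s` multiply to `x² - (q^{2s} + q^{-2s}) x y + y²`. -/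

open Finset

section
variable {K : Type*} [Field K]

theorem qInt_add (q : K) (a b : ℕ) :
    qInt q (a + b) = q⁻¹ ^ a * qInt q b + q ^ b * qInt q a := by
  simp only [qInt, mul_div_assoc', ← add_div]
  ring

@[simp]
theorem qFact_zero (q : K) : qFact q 0 = 1 := by
  simp [qFact]

theorem qFact_succ (q : K) (n : ℕ) : qFact q (n + 1) = qFact q n * qInt q (n + 1) :=
  prod_Icc_succ_top (by omega) _

theorem pow_sub_inv_pow_ne_zero {q : K} (hq : q ≠ 0) {n : ℕ} (h : q ^ (2 * n) ≠ 1) :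
    q ^ n - q⁻¹ ^ n ≠ 0 := by
  rw [sub_ne_zero]
  contrapose! h
  rw [two_mul, pow_add]
  nth_rw 2 [h]
  rw [← mul_pow, mul_inv_cancel₀ hq, one_pow]

theorem sub_mul_sub_inv_mul (x y : K) {a : K} (ha : a ≠ 0) :
    (x - a * y) * (x - a⁻¹ * y) = x ^ 2 - (a + a⁻¹) * x * y + y ^ 2 := by
  linear_combination y ^ 2 * mul_inv_cancel₀ ha

theorem prod_range_odd_eq_mul_prod_Icc {q : K} (hq : q ≠ 0) (r : ℕ) (x y : K) :
    ∏ k ∈ range (2 * r + 1), (x - q ^ (2 * r + 1) * q⁻¹ ^ (2 * k + 1) * y)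
      = (x - y) *
          ∏ s ∈ Icc 1 r, (x ^ 2 - (q ^ (2 * s) + q⁻¹ ^ (2 * s)) * x * y + y ^ 2) := by
  induction r with
  | zero => simp [mul_inv_cancel₀ hq]
  | succ r ih =>
    have hshift : ∀ k ∈ range (2 * r + 1), x - q ^ (2 * r + 3) * q⁻¹ ^ (2 * (k + 1) + 1) * y
        = x - q ^ (2 * r + 1) * q⁻¹ ^ (2 * k + 1) * y := by
      intro k _
      simp only [inv_pow]; field_simp; ring
    have hfirst : q ^ (2 * r + 3) * q⁻¹ ^ (2 * 0 + 1) = q ^ (2 * (r + 1)) := by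
      simp only [inv_pow]; field_simp; ring
    have hlast : q ^ (2 * r + 3) * q⁻¹ ^ (2 * (2 * r + 2) + 1) = (q ^ (2 * (r + 1)))⁻¹ := by
      simp only [inv_pow]; field_simp; ring
    rw [show 2 * (r + 1) + 1 = 2 * r + 1 + 1 + 1 by ring, prod_range_succ', prod_range_succ,
      show 2 * r + 1 + 1 + 1 = 2 * r + 3 by ring, prod_congr rfl hshift, ih, hfirst, hlast,
      prod_Icc_succ_top (by omega), inv_pow, ← sub_mul_sub_inv_mul x y (pow_ne_zero _ hq)]
    ring

variable {q : K} (hq : q ≠ 0) (hqroot : ∀ n : ℕ, 0 < n → q ^ n ≠ 1)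
include hq hqroot

theorem qInt_ne_zero {n : ℕ} (hn : 0 < n) : qInt q n ≠ 0 := by
  refine div_ne_zero (pow_sub_inv_pow_ne_zero hq (hqroot _ (by omega))) ?_
  simpa using pow_sub_inv_pow_ne_zero (n := 1) hq (hqroot 2 two_pos)

theorem qFact_ne_zero (n : ℕ) : qFact q n ≠ 0 :=
  prod_ne_zero_iff.mpr fun _ hl ↦ qInt_ne_zero hq hqroot (mem_Icc.mp hl).1

theorem qBinom_zero_right (n : ℕ) : qBinom q n 0 = 1 := by
  simp [qBinom, qFact_ne_zero hq hqroot]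

theorem qBinom_self (n : ℕ) : qBinom q n n = 1 := by
  simp [qBinom, qFact_ne_zero hq hqroot]

theorem qBinom_succ_succ {n j : ℕ} (hj : j < n) :
    qBinom q (n + 1) (j + 1)
      = q⁻¹ ^ (j + 1) * qBinom q n (j + 1) + q ^ (n - j) * qBinom q n j := by
  obtain ⟨d, rfl⟩ : ∃ d, n = j + 1 + d := ⟨n - j - 1, by omega⟩
  have hF := qFact_ne_zero hq hqroot
  have hI : ∀ m, qInt q (m + 1) ≠ 0 := fun m ↦ qInt_ne_zero hq hqroot m.succ_pos
  rw [qBinom, qBinom, qBinom, show j + 1 + d + 1 - (j + 1) = d + 1 by omega,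
    Nat.add_sub_cancel_left, show j + 1 + d - j = d + 1 by omega, qFact_succ _ (j + 1 + d),
    add_assoc _ d, qInt_add, qFact_succ _ j, qFact_succ _ d]
  field_simp [hF, hI]

theorem sum_qBinom_succ (n : ℕ) (x y : K) :
    ∑ j ∈ range (n + 2), (-1) ^ j * qBinom q (n + 1) j * x ^ (n + 1 - j) * y ^ j
      = (x - q ^ n * y) *
          ∑ j ∈ range (n + 1), (-1) ^ j * qBinom q n j * x ^ (n - j) * (q⁻¹ * y) ^ j := by
  set t : ℕ → K := fun j ↦ (-1) ^ j * qBinom q n j * x ^ (n - j) * (q⁻¹ * y) ^ j with ht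
  have hinner : ∀ j ∈ range n,
      (-1) ^ (j + 1) * qBinom q (n + 1) (j + 1) * x ^ (n + 1 - (j + 1)) * y ^ (j + 1)
        = x * t (j + 1) - q ^ n * y * t j := by
    intro j hj
    have hj := mem_range.mp hj
    obtain ⟨d, rfl⟩ : ∃ d, n = j + 1 + d := ⟨n - j - 1, by omega⟩
    simp only [ht, qBinom_succ_succ hq hqroot hj, show j + 1 + d + 1 - (j + 1) = d + 1 by omega,
      show j + 1 + d - (j + 1) = d by omega, show j + 1 + d - j = d + 1 by omega, mul_pow, inv_pow]
    field_simp
    ring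
  have hx : x * ∑ j ∈ range (n + 1), t j = ∑ j ∈ range n, x * t (j + 1) + x * t 0 := by
    rw [mul_sum, sum_range_succ']
  have hy : q ^ n * y * ∑ j ∈ range (n + 1), t j
      = ∑ j ∈ range n, q ^ n * y * t j + q ^ n * y * t n := by
    rw [mul_sum, sum_range_succ]
  have ht0 : t 0 = x ^ n := by simp [ht, qBinom_zero_right hq hqroot]
  have htn : t n = (-1) ^ n * (q⁻¹ * y) ^ n := by simp [ht, qBinom_self hq hqroot]
  rw [sub_mul, hx, hy, sum_range_succ', sum_range_succ, sum_congr rfl hinner, sum_sub_distrib, ht0,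
    htn, qBinom_zero_right hq hqroot, qBinom_self hq hqroot]
  simp only [Nat.sub_self, Nat.sub_zero, pow_zero, mul_pow, inv_pow]
  linear_combination (-1) ^ n * y ^ (n + 1) * mul_inv_cancel₀ (pow_ne_zero n hq)

theorem sum_qBinom_eq_prod (n : ℕ) (x y : K) :
    ∑ j ∈ range (n + 1), (-1) ^ j * qBinom q n j * x ^ (n - j) * y ^ j
      = ∏ k ∈ range n, (x - q ^ n * q⁻¹ ^ (2 * k + 1) * y) := by
  induction n generalizing y with
  | zero => simp [qBinom_zero_right hq hqroot]
  | succ n ih =>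
    have hshift : ∀ k ∈ range n, x - q ^ (n + 1) * q⁻¹ ^ (2 * (k + 1) + 1) * y
        = x - q ^ n * q⁻¹ ^ (2 * k + 1) * (q⁻¹ * y) := by
      intro k _
      simp only [inv_pow]; field_simp; ring
    rw [sum_qBinom_succ hq hqroot, ih, prod_range_succ', prod_congr rfl hshift, mul_comm,
      mul_zero, zero_add, pow_one, pow_succ, mul_inv_cancel_right₀ hq]

end

/-- At `ρ = 0`, the generating polynomial of the higher order q-Dolan–Grady
relations factorizes and its coefficients are Lusztig's q-binomials:
`(x-y) ∏_{s=1}^r (x² - (q^{2s}+q^{-2s})xy + y²)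
  = Σ_{j=0}^{2r+1} (-1)^j [2r+1 choose j]_q x^{2r+1-j} y^j`. -/
theorem stmt13 (K : Type*) [Field K] (q : K) (hq : q ≠ 0)
    (hqroot : ∀ n : ℕ, 0 < n → q ^ n ≠ 1) :
    ∀ r : ℕ, 1 ≤ r → ∀ x y : K,
      (x - y) * ∏ s ∈ Finset.Icc 1 r,
          (x ^ 2 - (q ^ (2 * s) + q⁻¹ ^ (2 * s)) * x * y + y ^ 2)
        = ∑ j ∈ Finset.range (2 * r + 2),
            (-1 : K) ^ j * qBinom q (2 * r + 1) j * x ^ (2 * r + 1 - j) * y ^ j := by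
  intro r _ x y
  rw [← prod_range_odd_eq_mul_prod_Icc hq]
  exact (sum_qBinom_eq_prod hq hqroot (2 * r + 1) x y).symm
end

section
/- Let K be a field, q ∈ K a unit that is not a root of unity, R an associative unital K-algebra, A, A* ∈ R, and ρ₀ ∈ K. Assume the q-Dolan–Grady relation A³A* − [3]_q·A²A*A + [3]_q·A A* A² − A*A³ = ρ₀·(AA* − A*A), where [3]_q = q² + 1 + q^{−2}. Then for every integer m ≥ 0, the element A^m·A* lies in the K-linear span of the set of elements ρ₀^p·A^i·A*·A^j with integers p, i, j ≥ 0 satisfying i ≤ 2 and i + j + 2p = m. -/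
/-!
Multiplying the cubic relation on the left by `A ^ n` rewrites `A ^ (n + 3) * A*` through
`A ^ k * A*` with `k ≤ n + 2`, each multiplied on the right by a power of `A` or scaled by `ρ₀`.
The total degree, counting `ρ₀` twice, is preserved, so strong induction on `m` concludes.
-/

namespace QOnsager

variable {K R : Type*} [CommRing K] [Ring R] [Algebra K R]

def orderedSpan (A Astar : R) (ρ₀ : K) (m : ℕ) : Submodule K R :=
  Submodule.span K
    {x : R | ∃ p i j : ℕ, i ≤ 2 ∧ i + j + 2 * p = m ∧ x = ρ₀ ^ p • (A ^ i * Astar * A ^ j)}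

variable {A Astar : R} {ρ₀ : K}

theorem pow_mul_mem_orderedSpan_of_le_two {m : ℕ} (hm : m ≤ 2) :
    A ^ m * Astar ∈ orderedSpan A Astar ρ₀ m :=
  Submodule.subset_span ⟨0, m, 0, hm, by omega, by simp⟩

theorem mul_pow_mem_orderedSpan {m : ℕ} {x : R} (hx : x ∈ orderedSpan A Astar ρ₀ m) (k : ℕ) :
    x * A ^ k ∈ orderedSpan A Astar ρ₀ (m + k) := by
  have hmap := Submodule.mem_map_of_mem (f := LinearMap.mulRight K (A ^ k)) hx
  rw [orderedSpan, Submodule.map_span] at hmap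
  refine Submodule.span_mono ?_ hmap
  rintro _ ⟨_, ⟨p, i, j, hi, hdeg, rfl⟩, rfl⟩
  exact ⟨p, i, j + k, hi, by omega, by simp [mul_assoc, pow_add]⟩

theorem smul_mem_orderedSpan {m : ℕ} {x : R} (hx : x ∈ orderedSpan A Astar ρ₀ m) :
    ρ₀ • x ∈ orderedSpan A Astar ρ₀ (m + 2) := by
  have hmap := Submodule.mem_map_of_mem (f := LinearMap.lsmul K R ρ₀) hx
  rw [orderedSpan, Submodule.map_span] at hmap
  refine Submodule.span_mono ?_ hmap
  rintro _ ⟨_, ⟨p, i, j, hi, hdeg, rfl⟩, rfl⟩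
  exact ⟨p + 1, i, j, hi, by omega, by simp [smul_smul, pow_succ]⟩

theorem pow_add_three_mul_eq {c : K}
    (hrel : A ^ 3 * Astar - c • (A ^ 2 * Astar * A) + c • (A * Astar * A ^ 2) - Astar * A ^ 3
      = ρ₀ • (A * Astar - Astar * A)) (n : ℕ) :
    A ^ (n + 3) * Astar
      = c • (A ^ (n + 2) * Astar * A) - c • (A ^ (n + 1) * Astar * A ^ 2)
        + A ^ n * Astar * A ^ 3 + ρ₀ • (A ^ (n + 1) * Astar) - ρ₀ • (A ^ n * Astar * A) := by
  have hcube : A ^ 3 * Astar = c • (A ^ 2 * Astar * A) - c • (A * Astar * A ^ 2)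
      + Astar * A ^ 3 + ρ₀ • (A * Astar) - ρ₀ • (Astar * A) := by
    rw [smul_sub] at hrel
    linear_combination (norm := module) hrel
  rw [pow_add, mul_assoc, hcube]
  simp only [mul_sub, mul_add, mul_smul_comm, ← mul_assoc, ← pow_add, ← pow_succ]

theorem pow_mul_mem_orderedSpan {c : K}
    (hrel : A ^ 3 * Astar - c • (A ^ 2 * Astar * A) + c • (A * Astar * A ^ 2) - Astar * A ^ 3
      = ρ₀ • (A * Astar - Astar * A)) (m : ℕ) :
    A ^ m * Astar ∈ orderedSpan A Astar ρ₀ m := by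
  induction m using Nat.strong_induction_on with
  | _ m ih =>
    rcases le_or_gt m 2 with hm | hm
    · exact pow_mul_mem_orderedSpan_of_le_two hm
    obtain ⟨n, rfl⟩ : ∃ n, m = n + 3 := ⟨m - 3, by omega⟩
    have ih₀ := ih n (by omega)
    have ih₁ := ih (n + 1) (by omega)
    have ih₂ := ih (n + 2) (by omega)
    rw [pow_add_three_mul_eq hrel]
    refine sub_mem (add_mem (add_mem (sub_mem ?_ ?_) ?_) ?_) ?_
    · exact Submodule.smul_mem _ c (by simpa using mul_pow_mem_orderedSpan ih₂ 1)
    · exact Submodule.smul_mem _ c (mul_pow_mem_orderedSpan ih₁ 2)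
    · exact mul_pow_mem_orderedSpan ih₀ 3
    · exact smul_mem_orderedSpan ih₁
    · exact smul_mem_orderedSpan (by simpa using mul_pow_mem_orderedSpan ih₀ 1)

end QOnsager

theorem stmt18_general (K R : Type*) [Field K] [Ring R] [Algebra K R]
    (q : K)
    (A Astar : R) (ρ₀ : K)
    (hDG : A ^ 3 * Astar - (q ^ 2 + 1 + q⁻¹ ^ 2) • (A ^ 2 * Astar * A)
        + (q ^ 2 + 1 + q⁻¹ ^ 2) • (A * Astar * A ^ 2) - Astar * A ^ 3
      = ρ₀ • (A * Astar - Astar * A)) :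
    ∀ m : ℕ, A ^ m * Astar ∈ Submodule.span K
      {x : R | ∃ p i j : ℕ, i ≤ 2 ∧ i + j + 2 * p = m ∧
        x = ρ₀ ^ p • (A ^ i * Astar * A ^ j)} :=
  QOnsager.pow_mul_mem_orderedSpan hDG

/-- The ordering (reduction) lemma for the q-Onsager algebra: if `A, A*`
satisfy the q-Dolan–Grady relation, then every monomial `A^m A*` lies in the
`K`-linear span of the elements `ρ₀^p A^i A* A^j` with `i ≤ 2` and
`i + j + 2p = m`. -/
theorem stmt18 (K R : Type*) [Field K] [Ring R] [Algebra K R]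
    (q : K) (hq : q ≠ 0) (hqroot : ∀ n : ℕ, 0 < n → q ^ n ≠ 1)
    (A Astar : R) (ρ₀ : K)
    (hDG : A ^ 3 * Astar - (q ^ 2 + 1 + q⁻¹ ^ 2) • (A ^ 2 * Astar * A)
        + (q ^ 2 + 1 + q⁻¹ ^ 2) • (A * Astar * A ^ 2) - Astar * A ^ 3
      = ρ₀ • (A * Astar - Astar * A)) :
    ∀ m : ℕ, A ^ m * Astar ∈ Submodule.span K
      {x : R | ∃ p i j : ℕ, i ≤ 2 ∧ i + j + 2 * p = m ∧
        x = ρ₀ ^ p • (A ^ i * Astar * A ^ j)} :=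
  stmt18_general K R q A Astar ρ₀ hDG
end
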